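/- Fix an integer M ≥ 0 and reals c, σ_min > 0, q > 2, C ≥ 1, together with k > 0 and n ∈ ℕ. Then there exists a finite constant B₂ = B₂(k, n, M, q, c, σ_min, C) such that for every sequence (X_i)_{i∈ℕ} ∈ D(M, q, c, σ_min, C), every p ≥ ⌈2k⌉(M+1) + 2(nM+1), and every index 1 ≤ i ≤ p, the geometric median m_p of X := (X_1, …, X_p) satisfies E[ ‖X_{−ℰⁿ(i)} − m_{p,−ℰⁿ(i)}‖^{−k} ] ≤ B₂ / ( E[ ‖X_{−ℰⁿ(i)} − m_{p,−ℰⁿ(i)}‖² ] )^{k/2}, where ℰⁿ(i) := {i−nM, …, i+nM} and for v ∈ ℝ^p the vector v_{−ℰⁿ(i)} := (v_j)_{j ∈ {1,…,p} \ ℰⁿ(i)}. -/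

import Mathlib

open MeasureTheory ProbabilityTheory Filter
open scoped ENNReal

noncomputable section

/-- `M`-dependence of a sequence of real random variables: for every `k`,
the family `(X_i)_{i ≤ k}` is independent of the family `(X_i)_{i ≥ k+M+1}`. -/
def MDependent {Ω : Type*} [MeasurableSpace Ω] (P : Measure Ω) (M : ℕ)
    (X : ℕ → Ω → ℝ) : Prop :=
  ∀ k : ℕ, IndepFun (fun ω => fun i : {i : ℕ // i ≤ k} => X i.1 ω)
    (fun ω => fun i : {i : ℕ // k + M + 1 ≤ i} => X i.1 ω) P

/-- The class `D(M, q, c, σmin, C)`: `M`-dependent sequences of absolutely continuous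
real random variables with density bounded by `c`, `E|X_i|^q ≤ C`, `E|X_i - μ_i|^q ≤ C`,
and standard deviation at least `σmin`. -/
structure MemD {Ω : Type*} [MeasurableSpace Ω] (P : Measure Ω) (M : ℕ)
    (q c σmin C : ℝ) (X : ℕ → Ω → ℝ) : Prop where
  measurable : ∀ i, Measurable (X i)
  mdep : MDependent P M X
  absCont : ∀ i, Measure.map (X i) P ≪ (volume : Measure ℝ)
  density_le : ∀ i, ∀ᵐ x ∂(volume : Measure ℝ),
      (Measure.map (X i) P).rnDeriv volume x ≤ ENNReal.ofReal c
  mom_le : ∀ i, ∫⁻ ω, ENNReal.ofReal (|X i ω| ^ q) ∂P ≤ ENNReal.ofReal C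
  cmom_le : ∀ i, ∫⁻ ω, ENNReal.ofReal (|X i ω - ∫ ω', X i ω' ∂P| ^ q) ∂P ≤ ENNReal.ofReal C
  sd_ge : ∀ i, σmin ^ 2 ≤ variance (X i) P

/-- The first `p` entries of a sequence of random variables,
as a random vector in Euclidean space (indices `0, …, p-1`). -/
def vecOf {Ω : Type*} (X : ℕ → Ω → ℝ) (p : ℕ) (ω : Ω) : EuclideanSpace ℝ (Fin p) :=
  WithLp.toLp 2 (fun i : Fin p => X i.1 ω)

/-- `m` is a geometric median of the random vector `X`:
it minimizes `E‖X - m‖` over `ℝ^p` (Euclidean norm). -/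
def IsGeometricMedian {Ω : Type*} [MeasurableSpace Ω] (P : Measure Ω) {p : ℕ}
    (X : Ω → EuclideanSpace ℝ (Fin p)) (m : EuclideanSpace ℝ (Fin p)) : Prop :=
  ∀ m' : EuclideanSpace ℝ (Fin p), ∫ ω, ‖X ω - m‖ ∂P ≤ ∫ ω, ‖X ω - m'‖ ∂P

/-!
Outside the window `ℰⁿ(i)` there remain more than `⌈2k⌉(M+1)` coordinates, so one can choose
`N ≥ ⌈2k⌉ + 1` of them pairwise more than `M` apart; by `M`-dependence these are independent.
A density bounded by `c` gives `E exp(-l (X_t - a)²) ≤ c √(π/l)`, and an exponential Markov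
inequality over the chosen coordinates yields the small-ball bound
`P(S ≤ u) ≤ (2πe c² u / N)^(N/2)` for the squared distance `S`. The layer-cake formula turns this
into `E S^(-k/2) ≤ (1+k) (2πe c² / N)^(k/2)`. Finally `E S` is comparable to `N`: it is at least
`σ_min²`, and at most `10 E‖X‖² ≤ 10 (1+C) p`, because a geometric median satisfies
`‖m‖ ≤ 2 E‖X‖`, while `p` is at most a constant multiple of `N`.
-/

open Real Set

def IsSpaced (d : ℕ) (T : Finset ℕ) : Prop :=
  ∀ s ∈ T, ∀ t ∈ T, s < t → s + d ≤ t

lemma IsSpaced.mono {d : ℕ} {T T' : Finset ℕ} (hT : IsSpaced d T) (h : T' ⊆ T) :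
    IsSpaced d T' :=
  fun s hs t ht => hT s (h hs) t (h ht)

/-- Greedy choice from the top: keep the maximum and discard the `d` elements below it. -/
lemma exists_isSpaced_subset (d : ℕ) (A : Finset ℕ) :
    ∃ T ⊆ A, IsSpaced (d + 1) T ∧ A.card ≤ (d + 1) * T.card := by
  induction A using Finset.strongInduction with
  | _ A ih =>
    rcases A.eq_empty_or_nonempty with rfl | hA
    · exact ⟨∅, by simp [IsSpaced]⟩
    set a := A.max' hA
    set A' := A.filter (fun x => x + (d + 1) ≤ a)
    have haA' : a ∉ A' := by simp [A']
    obtain ⟨T, hTA', hT, hcard⟩ :=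
      ih A' ⟨Finset.filter_subset _ _, fun h => haA' (h (A.max'_mem hA))⟩
    have hTA : T ⊆ A := hTA'.trans (Finset.filter_subset _ _)
    refine ⟨insert a T, Finset.insert_subset (A.max'_mem hA) hTA, ?_, ?_⟩
    · intro s hs t ht hst
      rcases Finset.mem_insert.1 hs with rfl | hs <;> rcases Finset.mem_insert.1 ht with rfl | ht
      · omega
      · exact absurd (A.le_max' t (hTA ht)) (by omega)
      · exact (Finset.mem_filter.1 (hTA' hs)).2
      · exact hT s hs t ht hst
    · have hrest : (A.filter (fun x => ¬ x + (d + 1) ≤ a)).card ≤ d + 1 :=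
        calc _ ≤ (Finset.Icc (a - d) a).card := Finset.card_le_card fun x hx => by
              have := A.le_max' x (Finset.mem_filter.1 hx).1
              simp only [Finset.mem_Icc]
              have := (Finset.mem_filter.1 hx).2
              omega
          _ ≤ d + 1 := by simp; omega
      have : A'.card + _ = A.card := Finset.card_filter_add_card_filter_not _
      rw [Finset.card_insert_of_notMem fun h => haA' (hTA' h), Nat.mul_add, Nat.mul_one]
      omega

namespace MDependent

variable {Ω : Type*} [MeasurableSpace Ω] {P : Measure Ω} {M : ℕ} {X : ℕ → Ω → ℝ}

lemma lintegral_prod_eq_prod_lintegral [IsProbabilityMeasure P] (hdep : MDependent P M X)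
    (hX : ∀ i, Measurable (X i)) {g : ℕ → ℝ → ℝ≥0∞} (hg : ∀ i, Measurable (g i))
    {T : Finset ℕ} (hT : IsSpaced (M + 1) T) :
    ∫⁻ ω, ∏ t ∈ T, g t (X t ω) ∂P = ∏ t ∈ T, ∫⁻ ω, g t (X t ω) ∂P := by
  induction T using Finset.induction_on_max with
  | empty => simp
  | insert a s hlt ih =>
    have has : a ∉ s := fun h => lt_irrefl a (hlt a h)
    rcases s.eq_empty_or_nonempty with rfl | ⟨b, hb⟩
    · simp
    have hs : ∀ t ∈ s, t + (M + 1) ≤ a := fun t ht =>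
      hT t (Finset.mem_insert_of_mem ht) a (Finset.mem_insert_self a s) (hlt t ht)
    have hsK : ∀ t ∈ s, t ≤ a - (M + 1) := fun t ht => Nat.le_sub_of_add_le (hs t ht)
    have haK : a - (M + 1) + M + 1 ≤ a := by have := hs b hb; omega
    have hindep : IndepFun (fun ω => ∏ t ∈ s, g t (X t ω)) (fun ω => g a (X a ω)) P := by
      have h := (hdep (a - (M + 1))).comp
        (φ := fun v => ∏ t ∈ s.attach, g t.1 (v ⟨t.1, hsK t.1 t.2⟩))
        (ψ := fun v => g a (v ⟨a, haK⟩))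
        (Finset.measurable_prod _ fun t _ => by exact (hg t.1).comp (measurable_pi_apply _))
        (by exact (hg a).comp (measurable_pi_apply _))
      convert h using 2 with ω
      · exact (Finset.prod_attach s (fun t => g t (X t ω))).symm
      · rfl
    calc ∫⁻ ω, ∏ t ∈ insert a s, g t (X t ω) ∂P
        = ∫⁻ ω, (∏ t ∈ s, g t (X t ω)) * g a (X a ω) ∂P := by
          simp only [Finset.prod_insert has, mul_comm]
      _ = (∫⁻ ω, ∏ t ∈ s, g t (X t ω) ∂P) * ∫⁻ ω, g a (X a ω) ∂P :=
          lintegral_mul_eq_lintegral_mul_lintegral_of_indepFun (by fun_prop) (by fun_prop) hindep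
      _ = ∏ t ∈ insert a s, ∫⁻ ω, g t (X t ω) ∂P := by
          rw [ih (hT.mono (Finset.subset_insert a s)), Finset.prod_insert has, mul_comm]

end MDependent

section BoundedDensity

variable {Ω : Type*} [MeasurableSpace Ω] {P : Measure Ω} {Y : Ω → ℝ} {c : ℝ}

lemma lintegral_comp_le_of_rnDeriv_le [IsFiniteMeasure P] (hY : Measurable Y)
    (habs : P.map Y ≪ volume) (hd : ∀ᵐ x ∂volume, (P.map Y).rnDeriv volume x ≤ ENNReal.ofReal c)
    {f : ℝ → ℝ≥0∞} (hf : Measurable f) :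
    ∫⁻ ω, f (Y ω) ∂P ≤ ENNReal.ofReal c * ∫⁻ x, f x := by
  calc ∫⁻ ω, f (Y ω) ∂P = ∫⁻ x, f x ∂(volume.withDensity ((P.map Y).rnDeriv volume)) := by
        rw [Measure.withDensity_rnDeriv_eq _ _ habs, lintegral_map hf hY]
    _ = ∫⁻ x, (P.map Y).rnDeriv volume x * f x :=
        lintegral_withDensity_eq_lintegral_mul _ (Measure.measurable_rnDeriv _ _) hf
    _ ≤ ∫⁻ x, ENNReal.ofReal c * f x := by
        apply lintegral_mono_ae
        filter_upwards [hd] with x hx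
        exact mul_le_mul_left hx _
    _ = ENNReal.ofReal c * ∫⁻ x, f x := lintegral_const_mul _ hf

lemma lintegral_exp_neg_mul_sq_sub_le [IsFiniteMeasure P] (hc : 0 ≤ c) (hY : Measurable Y)
    (habs : P.map Y ≪ volume) (hd : ∀ᵐ x ∂volume, (P.map Y).rnDeriv volume x ≤ ENNReal.ofReal c)
    (a : ℝ) {l : ℝ} (hl : 0 < l) :
    ∫⁻ ω, ENNReal.ofReal (exp (-(l * (Y ω - a) ^ 2))) ∂P ≤ ENNReal.ofReal (c * √(π / l)) := by
  have hgauss : ∫⁻ x, ENNReal.ofReal (exp (-(l * (x - a) ^ 2))) = ENNReal.ofReal √(π / l) := by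
    rw [← ofReal_integral_eq_lintegral_ofReal _ (Eventually.of_forall fun x => (exp_pos _).le)]
    · simp_rw [← neg_mul]
      rw [integral_sub_right_eq_self (fun x => exp (-l * x ^ 2)) a, integral_gaussian]
    · simpa [neg_mul] using (integrable_exp_neg_mul_sq hl).comp_sub_right a
  calc _ ≤ ENNReal.ofReal c * ∫⁻ x, ENNReal.ofReal (exp (-(l * (x - a) ^ 2))) :=
        lintegral_comp_le_of_rnDeriv_le hY habs hd (by fun_prop)
    _ = ENNReal.ofReal (c * √(π / l)) := by rw [hgauss, ENNReal.ofReal_mul hc]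

end BoundedDensity

namespace MDependent

variable {Ω : Type*} [MeasurableSpace Ω] {P : Measure Ω} [IsProbabilityMeasure P] {M : ℕ}
  {X : ℕ → Ω → ℝ} {c : ℝ} {T : Finset ℕ} {S : Ω → ℝ}

lemma measure_le_le_exp_mul_pow (hdep : MDependent P M X) (hX : ∀ i, Measurable (X i))
    (habs : ∀ i, P.map (X i) ≪ volume)
    (hd : ∀ i, ∀ᵐ x ∂volume, (P.map (X i)).rnDeriv volume x ≤ ENNReal.ofReal c) (hc : 0 ≤ c)
    (hT : IsSpaced (M + 1) T) (a : ℕ → ℝ) (hS : Measurable S)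
    (hST : ∀ ω, ∑ t ∈ T, (X t ω - a t) ^ 2 ≤ S ω) (u : ℝ) {l : ℝ} (hl : 0 < l) :
    P {ω | S ω ≤ u} ≤ ENNReal.ofReal (exp (l * u) * (c * √(π / l)) ^ T.card) := by
  set g : ℕ → ℝ → ℝ≥0∞ := fun t x => ENNReal.ofReal (exp (-(l * (x - a t) ^ 2)))
  have hg : ∀ t, Measurable (g t) := fun t => by fun_prop
  have hmarkov : {ω | S ω ≤ u}.indicator 1
      ≤ fun ω => ENNReal.ofReal (exp (l * u)) * ∏ t ∈ T, g t (X t ω) := by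
    refine Set.indicator_le fun ω hω => ?_
    rw [← ENNReal.ofReal_prod_of_nonneg fun t _ => (exp_pos _).le, ← exp_sum,
      ← ENNReal.ofReal_mul (exp_pos _).le, ← exp_add, Pi.one_apply, ENNReal.one_le_ofReal,
      one_le_exp_iff, Finset.sum_neg_distrib, ← Finset.mul_sum]
    nlinarith [(hST ω).trans hω]
  calc P {ω | S ω ≤ u}
      = ∫⁻ ω, {ω | S ω ≤ u}.indicator 1 ω ∂P :=
        (lintegral_indicator_one (measurableSet_le hS measurable_const)).symm
    _ ≤ ∫⁻ ω, ENNReal.ofReal (exp (l * u)) * ∏ t ∈ T, g t (X t ω) ∂P := lintegral_mono hmarkov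
    _ = ENNReal.ofReal (exp (l * u)) * ∏ t ∈ T, ∫⁻ ω, g t (X t ω) ∂P := by
        rw [lintegral_const_mul _ (by fun_prop),
          hdep.lintegral_prod_eq_prod_lintegral hX hg hT]
    _ ≤ ENNReal.ofReal (exp (l * u)) * ∏ _t ∈ T, ENNReal.ofReal (c * √(π / l)) := by
        gcongr with t
        exact lintegral_exp_neg_mul_sq_sub_le hc (hX t) (habs t) (hd t) (a t) hl
    _ = ENNReal.ofReal (exp (l * u) * (c * √(π / l)) ^ T.card) := by
        rw [Finset.prod_const, ← ENNReal.ofReal_pow (by positivity),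
          ← ENNReal.ofReal_mul (exp_pos _).le]

lemma measure_le_le_rpow (hdep : MDependent P M X) (hX : ∀ i, Measurable (X i))
    (habs : ∀ i, P.map (X i) ≪ volume)
    (hd : ∀ i, ∀ᵐ x ∂volume, (P.map (X i)).rnDeriv volume x ≤ ENNReal.ofReal c) (hc : 0 ≤ c)
    (hT : IsSpaced (M + 1) T) (hT0 : T.Nonempty) (a : ℕ → ℝ) (hS : Measurable S)
    (hST : ∀ ω, ∑ t ∈ T, (X t ω - a t) ^ 2 ≤ S ω) {u : ℝ} (hu : 0 < u) :
    P {ω | S ω ≤ u} ≤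
      ENNReal.ofReal ((2 * π * exp 1 * c ^ 2 / T.card * u) ^ ((T.card : ℝ) / 2)) := by
  have hN : (0 : ℝ) < T.card := by exact_mod_cast hT0.card_pos
  refine (hdep.measure_le_le_exp_mul_pow hX habs hd hc hT a hS hST u
    (l := T.card / (2 * u)) (by positivity)).trans_eq (congrArg _ ?_)
  have hpow : ∀ x : ℝ, 0 ≤ x → x ^ T.card = (x ^ 2) ^ ((T.card : ℝ) / 2) := fun x hx => by
    rw [← rpow_natCast, ← rpow_natCast x 2, ← rpow_mul hx]
    congr 1
    push_cast
    ring
  have hexp : exp (T.card / (2 * u) * u) = exp 1 ^ ((T.card : ℝ) / 2) := by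
    rw [exp_one_rpow]
    field_simp
  rw [hexp, hpow _ (by positivity), ← mul_rpow (exp_pos 1).le (by positivity), mul_pow,
    sq_sqrt (by positivity)]
  congr 1
  field_simp

end MDependent

lemma le_rpow_neg_two_div_of_le_sqrt_rpow_neg {s t k : ℝ} (hs : 0 ≤ s) (ht : 0 < t) (hk : 0 < k)
    (h : t ≤ √s ^ (-k)) : s ≤ t ^ (-(2 / k)) := by
  rcases hs.eq_or_lt with rfl | hs
  · exact (rpow_pos_of_pos ht _).le
  have hsqrt : (√s ^ (-k)) ^ (-(2 / k)) = s := by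
    rw [← rpow_mul (sqrt_nonneg s), show -k * -(2 / k) = (2 : ℕ) by push_cast; field_simp,
      rpow_natCast, sq_sqrt hs.le]
  calc s = (√s ^ (-k)) ^ (-(2 / k)) := hsqrt.symm
    _ ≤ t ^ (-(2 / k)) := rpow_le_rpow_of_nonpos ht h (neg_nonpos.2 (by positivity))

lemma setLIntegral_Ioi_le_of_le_one_of_le_rpow {g : ℝ → ℝ≥0∞} {t₀ r : ℝ} (ht₀ : 0 < t₀)
    (hr : 1 < r) (hg₁ : ∀ t, g t ≤ 1)
    (hg : ∀ t, t₀ < t → g t ≤ ENNReal.ofReal (t₀ ^ r * t ^ (-r))) :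
    ∫⁻ t in Ioi 0, g t ≤ ENNReal.ofReal (t₀ + t₀ / (r - 1)) := by
  have hr' : -r < -1 := by linarith
  have hnear : ∫⁻ t in Ioc 0 t₀, g t ≤ ENNReal.ofReal t₀ :=
    calc ∫⁻ t in Ioc 0 t₀, g t ≤ ∫⁻ _ in Ioc 0 t₀, 1 := lintegral_mono hg₁
      _ = ENNReal.ofReal t₀ := by rw [setLIntegral_one, volume_Ioc, sub_zero]
  have hfar : ∫⁻ t in Ioi t₀, g t ≤ ENNReal.ofReal (t₀ / (r - 1)) :=
    calc ∫⁻ t in Ioi t₀, g t ≤ ∫⁻ t in Ioi t₀, ENNReal.ofReal (t₀ ^ r * t ^ (-r)) :=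
          setLIntegral_mono' measurableSet_Ioi hg
      _ = ENNReal.ofReal (∫ t in Ioi t₀, t₀ ^ r * t ^ (-r)) := by
          rw [ofReal_integral_eq_lintegral_ofReal
            ((integrableOn_Ioi_rpow_of_lt hr' ht₀).const_mul _)]
          filter_upwards [ae_restrict_mem measurableSet_Ioi] with t ht
          exact mul_nonneg (rpow_nonneg ht₀.le _) (rpow_nonneg (ht₀.trans ht).le _)
      _ = ENNReal.ofReal (t₀ / (r - 1)) := by
          rw [integral_const_mul, integral_Ioi_rpow_of_lt hr' ht₀, rpow_add ht₀, rpow_neg ht₀.le,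
            rpow_one, show -r + 1 = -(r - 1) by ring, div_neg]
          congr 1
          field_simp
  calc ∫⁻ t in Ioi 0, g t = (∫⁻ t in Ioc 0 t₀, g t) + ∫⁻ t in Ioi t₀, g t := by
        rw [← Ioc_union_Ioi_eq_Ioi ht₀.le, lintegral_union measurableSet_Ioi
          (Ioc_disjoint_Ioi le_rfl)]
    _ ≤ ENNReal.ofReal t₀ + ENNReal.ofReal (t₀ / (r - 1)) := add_le_add hnear hfar
    _ = ENNReal.ofReal (t₀ + t₀ / (r - 1)) :=
        (ENNReal.ofReal_add ht₀.le (div_pos ht₀ (by linarith)).le).symm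

lemma lintegral_sqrt_rpow_neg_le_of_measure_le_le {Ω : Type*} [MeasurableSpace Ω]
    {P : Measure Ω} [IsProbabilityMeasure P] {S : Ω → ℝ} (hS : Measurable S)
    (hS0 : ∀ ω, 0 ≤ S ω) {β N k : ℝ} (hβ : 0 < β) (hk : 0 < k) (hkN : k + 1 ≤ N)
    (hsmall : ∀ u, 0 < u → P {ω | S ω ≤ u} ≤ ENNReal.ofReal ((β * u) ^ (N / 2))) :
    ∫⁻ ω, ENNReal.ofReal (√(S ω) ^ (-k)) ∂P ≤ ENNReal.ofReal ((1 + k) * β ^ (k / 2)) := by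
  have ht₀ : 0 < β ^ (k / 2) := rpow_pos_of_pos hβ _
  have hr : 1 < N / k := (one_lt_div hk).2 (by linarith)
  rw [lintegral_eq_lintegral_meas_le P (Eventually.of_forall fun ω => rpow_nonneg (sqrt_nonneg _) _)
    (by fun_prop)]
  refine (setLIntegral_Ioi_le_of_le_one_of_le_rpow ht₀ hr (fun t => prob_le_one)
    fun t ht => ?_).trans (ENNReal.ofReal_le_ofReal ?_)
  · have ht : 0 < t := ht₀.trans ht
    calc P {ω | t ≤ √(S ω) ^ (-k)} ≤ P {ω | S ω ≤ t ^ (-(2 / k))} :=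
          measure_mono fun ω hω => le_rpow_neg_two_div_of_le_sqrt_rpow_neg (hS0 ω) ht hk hω
      _ ≤ ENNReal.ofReal ((β * t ^ (-(2 / k))) ^ (N / 2)) := hsmall _ (rpow_pos_of_pos ht _)
      _ = ENNReal.ofReal ((β ^ (k / 2)) ^ (N / k) * t ^ (-(N / k))) := by
          rw [mul_rpow hβ.le (rpow_nonneg ht.le _), ← rpow_mul hβ.le, ← rpow_mul ht.le]
          congr 3 <;> field_simp
  · have hkr : 1 ≤ k * (N / k - 1) := by
      rw [mul_sub, mul_div_cancel₀ _ hk.ne']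
      linarith
    have : β ^ (k / 2) / (N / k - 1) ≤ k * β ^ (k / 2) := by
      rw [div_le_iff₀ (by linarith)]
      nlinarith
    linarith

section Moments

variable {Ω : Type*} [MeasurableSpace Ω] {P : Measure Ω} {Y : Ω → ℝ} {q C : ℝ}

lemma sq_le_one_add_abs_rpow (hq : 2 ≤ q) (y : ℝ) : y ^ 2 ≤ 1 + |y| ^ q := by
  rcases le_total |y| 1 with h | h
  · have : y ^ 2 ≤ 1 := by rw [← sq_abs]; exact pow_le_one₀ (abs_nonneg y) h
    linarith [rpow_nonneg (abs_nonneg y) q]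
  · have := rpow_le_rpow_of_exponent_le h hq
    rw [rpow_two, sq_abs] at this
    linarith

lemma integrable_abs_rpow_of_lintegral_le (hY : Measurable Y)
    (hmom : ∫⁻ ω, ENNReal.ofReal (|Y ω| ^ q) ∂P ≤ ENNReal.ofReal C) :
    Integrable (fun ω => |Y ω| ^ q) P :=
  ⟨(hY.abs.pow_const q).aestronglyMeasurable,
    (hasFiniteIntegral_iff_ofReal (Eventually.of_forall fun _ => rpow_nonneg (abs_nonneg _) _)).2
      (hmom.trans_lt ENNReal.ofReal_lt_top)⟩

lemma memLp_two_of_lintegral_abs_rpow_le [IsFiniteMeasure P] (hq : 2 ≤ q) (hY : Measurable Y)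
    (hmom : ∫⁻ ω, ENNReal.ofReal (|Y ω| ^ q) ∂P ≤ ENNReal.ofReal C) : MemLp Y 2 P := by
  refine (memLp_two_iff_integrable_sq hY.aestronglyMeasurable).2 <|
    ((integrable_const 1).add (integrable_abs_rpow_of_lintegral_le hY hmom)).mono' (by fun_prop)
      (Eventually.of_forall fun ω => ?_)
  rw [norm_of_nonneg (sq_nonneg _)]
  exact sq_le_one_add_abs_rpow hq _

lemma integral_sq_le_of_lintegral_abs_rpow_le [IsProbabilityMeasure P] (hq : 2 ≤ q) (hC : 0 ≤ C)
    (hY : Measurable Y) (hmom : ∫⁻ ω, ENNReal.ofReal (|Y ω| ^ q) ∂P ≤ ENNReal.ofReal C) :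
    ∫ ω, Y ω ^ 2 ∂P ≤ 1 + C := by
  have hint := integrable_abs_rpow_of_lintegral_le hY hmom
  have hqC : ∫ ω, |Y ω| ^ q ∂P ≤ C := by
    rwa [← ENNReal.ofReal_le_ofReal_iff hC, ofReal_integral_eq_lintegral_ofReal hint
      (Eventually.of_forall fun ω => rpow_nonneg (abs_nonneg _) _)]
  calc ∫ ω, Y ω ^ 2 ∂P ≤ ∫ ω, (1 + |Y ω| ^ q) ∂P :=
        integral_mono ((memLp_two_of_lintegral_abs_rpow_le hq hY hmom).integrable_sq)
          ((integrable_const 1).add hint) fun ω => sq_le_one_add_abs_rpow hq _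
    _ ≤ 1 + C := by
        rw [integral_add (integrable_const 1) hint, integral_const, probReal_univ, one_smul]
        linarith

lemma sum_integral_sq_le_of_lintegral_abs_rpow_le [IsProbabilityMeasure P] {X : ℕ → Ω → ℝ}
    (hq : 2 ≤ q) (hC : 0 ≤ C) (hX : ∀ i, Measurable (X i))
    (hmom : ∀ i, ∫⁻ ω, ENNReal.ofReal (|X i ω| ^ q) ∂P ≤ ENNReal.ofReal C) (p : ℕ) :
    ∑ j : Fin p, ∫ ω, X j.1 ω ^ 2 ∂P ≤ (1 + C) * p :=
  calc ∑ j : Fin p, ∫ ω, X j.1 ω ^ 2 ∂P ≤ ∑ _j : Fin p, (1 + C) :=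
        Finset.sum_le_sum fun j _ =>
          integral_sq_le_of_lintegral_abs_rpow_le hq hC (hX j.1) (hmom j.1)
    _ = (1 + C) * p := by simp; ring

lemma sq_integral_le_integral_sq [IsProbabilityMeasure P] (hY : MemLp Y 2 P) :
    (∫ ω, Y ω ∂P) ^ 2 ≤ ∫ ω, Y ω ^ 2 ∂P := by
  have := variance_nonneg Y P
  rw [variance_eq_sub hY] at this
  exact sub_nonneg.1 this

lemma variance_le_integral_sq_sub [IsProbabilityMeasure P] (hY : AEStronglyMeasurable Y P)
    (a : ℝ) : variance Y P ≤ ∫ ω, (Y ω - a) ^ 2 ∂P := by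
  rw [← variance_sub_const hY a]
  exact variance_le_expectation_sq (hY.sub aestronglyMeasurable_const)

end Moments

namespace IsGeometricMedian

variable {Ω : Type*} [MeasurableSpace Ω] {P : Measure Ω} [IsProbabilityMeasure P] {p : ℕ}
  {X : Ω → EuclideanSpace ℝ (Fin p)} {m : EuclideanSpace ℝ (Fin p)}

lemma norm_le (hm : IsGeometricMedian P X m) (hX : Integrable X P) :
    ‖m‖ ≤ 2 * ∫ ω, ‖X ω‖ ∂P := by
  have hXm : Integrable (fun ω => ‖X ω - m‖) P := (hX.sub (integrable_const m)).norm
  calc ‖m‖ = ∫ _, ‖m‖ ∂P := by simp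
    _ ≤ ∫ ω, (‖X ω - m‖ + ‖X ω‖) ∂P :=
        integral_mono (integrable_const _) (hXm.add hX.norm) fun ω => by
          simpa [add_comm] using norm_sub_le (X ω) (X ω - m)
    _ ≤ ∫ ω, ‖X ω - 0‖ ∂P + ∫ ω, ‖X ω‖ ∂P := by
        rw [integral_add hXm hX.norm]
        exact add_le_add_left (hm 0) _
    _ = 2 * ∫ ω, ‖X ω‖ ∂P := by simp only [sub_zero]; ring

lemma integral_norm_sub_sq_le (hm : IsGeometricMedian P X m) (hX : MemLp X 2 P) :
    ∫ ω, ‖X ω - m‖ ^ 2 ∂P ≤ 10 * ∫ ω, ‖X ω‖ ^ 2 ∂P := by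
  have hX2 : Integrable (fun ω => ‖X ω‖ ^ 2) P := hX.integrable_norm_pow two_ne_zero
  have hm2 : ‖m‖ ^ 2 ≤ 4 * ∫ ω, ‖X ω‖ ^ 2 ∂P :=
    calc ‖m‖ ^ 2 ≤ (2 * ∫ ω, ‖X ω‖ ∂P) ^ 2 :=
          pow_le_pow_left₀ (norm_nonneg m) (norm_le hm (hX.integrable one_le_two)) 2
      _ ≤ 4 * ∫ ω, ‖X ω‖ ^ 2 ∂P := by
          rw [mul_pow]
          nlinarith [sq_integral_le_integral_sq hX.norm]
  calc ∫ ω, ‖X ω - m‖ ^ 2 ∂P ≤ ∫ ω, (2 * ‖X ω‖ ^ 2 + 2 * ‖m‖ ^ 2) ∂P := by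
        refine integral_mono ((hX.sub (memLp_const m)).integrable_norm_pow two_ne_zero)
          ((hX2.const_mul 2).add (integrable_const _)) fun ω => ?_
        nlinarith [norm_sub_le (X ω) m, norm_nonneg (X ω - m), sq_nonneg (‖X ω‖ - ‖m‖)]
    _ = 2 * ∫ ω, ‖X ω‖ ^ 2 ∂P + 2 * ‖m‖ ^ 2 := by
        rw [integral_add (hX2.const_mul 2) (integrable_const _), integral_const_mul,
          integral_const, probReal_univ, one_smul]
    _ ≤ 10 * ∫ ω, ‖X ω‖ ^ 2 ∂P := by linarith

end IsGeometricMedian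

lemma card_filter_lt_sub_or_add_lt (p i w : ℕ) :
    p ≤ (Finset.univ.filter (fun j : Fin p => j.1 < i - w ∨ i + w < j.1)).card + (2 * w + 1) := by
  have hwindow : (Finset.univ.filter (fun j : Fin p => ¬(j.1 < i - w ∨ i + w < j.1))).card
      ≤ 2 * w + 1 :=
    calc _ ≤ (Finset.Icc (i - w) (i + w)).card :=
          Finset.card_le_card_of_injOn Fin.val (fun j hj => by
            simp only [Finset.coe_filter, Finset.mem_univ, true_and, Set.mem_ofPred_eq] at hj
            simp only [Finset.coe_Icc, Set.mem_Icc]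
            omega) Fin.val_injective.injOn
      _ ≤ 2 * w + 1 := by simp; omega
  have := Finset.card_filter_add_card_filter_not (s := (Finset.univ : Finset (Fin p)))
    (p := fun j : Fin p => j.1 < i - w ∨ i + w < j.1)
  rw [Finset.card_univ, Fintype.card_fin] at this
  omega

lemma exists_isSpaced_subset_filter_lt_sub_or_add_lt {p K d w : ℕ} (i : ℕ)
    (hp : K * (d + 1) + 2 * (w + 1) ≤ p) :
    ∃ T ⊆ (Finset.univ.filter (fun j : Fin p => j.1 < i - w ∨ i + w < j.1)).image Fin.val,
      IsSpaced (d + 1) T ∧ K + 1 ≤ T.card ∧ p ≤ (2 * w + d + 2) * T.card := by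
  obtain ⟨T, hTJ, hT, hcard⟩ := exists_isSpaced_subset d
    ((Finset.univ.filter (fun j : Fin p => j.1 < i - w ∨ i + w < j.1)).image Fin.val)
  rw [Finset.card_image_of_injective _ Fin.val_injective] at hcard
  have hJ := card_filter_lt_sub_or_add_lt p i w
  have hKT : K + 1 ≤ T.card := by
    by_contra! h
    have : (d + 1) * T.card ≤ (d + 1) * K := Nat.mul_le_mul_left _ (by omega)
    nlinarith
  refine ⟨T, hTJ, hT, hKT, ?_⟩
  nlinarith

lemma sum_sq_sub_le_norm_vecOf_sub_sq {Ω : Type*} {X : ℕ → Ω → ℝ} {p : ℕ}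
    {m : EuclideanSpace ℝ (Fin p)} (J : Finset (Fin p)) (ω : Ω) :
    ∑ j ∈ J, (X j.1 ω - m j) ^ 2 ≤ ‖vecOf X p ω - m‖ ^ 2 := by
  rw [EuclideanSpace.real_norm_sq_eq]
  exact Finset.sum_le_sum_of_subset_of_nonneg J.subset_univ fun j _ _ => sq_nonneg _

section Vector

variable {Ω : Type*} [MeasurableSpace Ω] {P : Measure Ω} [IsProbabilityMeasure P] {X : ℕ → Ω → ℝ}
  {p : ℕ} {m : EuclideanSpace ℝ (Fin p)}

lemma integrable_sum_sq_sub (hX : ∀ i, MemLp (X i) 2 P) (J : Finset (Fin p)) :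
    Integrable (fun ω => ∑ j ∈ J, (X j.1 ω - m j) ^ 2) P :=
  integrable_finsetSum J fun j _ => ((hX j.1).sub (memLp_const (m j))).integrable_sq

lemma integral_sum_sq_sub_le (hX : ∀ i, MemLp (X i) 2 P) (hm : IsGeometricMedian P (vecOf X p) m)
    (J : Finset (Fin p)) :
    ∫ ω, ∑ j ∈ J, (X j.1 ω - m j) ^ 2 ∂P ≤ 10 * ∑ j : Fin p, ∫ ω, X j.1 ω ^ 2 ∂P := by
  have hvec : MemLp (vecOf X p) 2 P := MemLp.of_eval_piLp fun j => hX j.1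
  calc ∫ ω, ∑ j ∈ J, (X j.1 ω - m j) ^ 2 ∂P ≤ ∫ ω, ‖vecOf X p ω - m‖ ^ 2 ∂P :=
        integral_mono (integrable_sum_sq_sub hX J)
          ((hvec.sub (memLp_const m)).integrable_norm_pow two_ne_zero)
          (sum_sq_sub_le_norm_vecOf_sub_sq J)
    _ ≤ 10 * ∫ ω, ‖vecOf X p ω‖ ^ 2 ∂P := IsGeometricMedian.integral_norm_sub_sq_le hm hvec
    _ = 10 * ∑ j : Fin p, ∫ ω, X j.1 ω ^ 2 ∂P := by
        simp_rw [EuclideanSpace.real_norm_sq_eq]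
        rw [integral_finsetSum _ fun j _ => (hX j.1).integrable_sq]
        rfl

lemma variance_le_integral_sum_sq_sub (hX : ∀ i, MemLp (X i) 2 P) {J : Finset (Fin p)}
    {j : Fin p} (hj : j ∈ J) :
    variance (X j.1) P ≤ ∫ ω, ∑ j ∈ J, (X j.1 ω - m j) ^ 2 ∂P := by
  have hint : ∀ j ∈ J, Integrable (fun ω => (X j.1 ω - m j) ^ 2) P :=
    fun j _ => ((hX j.1).sub (memLp_const (m j))).integrable_sq
  rw [integral_finsetSum J hint]
  exact (variance_le_integral_sq_sub (hX j.1).1 (m j)).trans <|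
    Finset.single_le_sum (f := fun j : Fin p => ∫ ω, (X j.1 ω - m j) ^ 2 ∂P)
      (fun j _ => integral_nonneg fun _ => sq_nonneg _) hj

end Vector

lemma MDependent.lintegral_sqrt_sum_sq_sub_rpow_neg_le {Ω : Type*} [MeasurableSpace Ω]
    {P : Measure Ω} [IsProbabilityMeasure P] {M : ℕ} {X : ℕ → Ω → ℝ} {c : ℝ}
    (hdep : MDependent P M X) (hX : ∀ i, Measurable (X i)) (habs : ∀ i, P.map (X i) ≪ volume)
    (hd : ∀ i, ∀ᵐ x ∂volume, (P.map (X i)).rnDeriv volume x ≤ ENNReal.ofReal c) (hc : 0 < c)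
    {p : ℕ} (m : EuclideanSpace ℝ (Fin p)) {J : Finset (Fin p)} {T : Finset ℕ}
    (hT : IsSpaced (M + 1) T) (hTJ : T ⊆ J.image Fin.val) {k : ℝ} (hk : 0 < k)
    (hkT : k + 1 ≤ T.card) :
    ∫⁻ ω, ENNReal.ofReal (√(∑ j ∈ J, (X j.1 ω - m j) ^ 2) ^ (-k)) ∂P
      ≤ ENNReal.ofReal ((1 + k) * (2 * π * exp 1 * c ^ 2 / T.card) ^ (k / 2)) := by
  have hT0 : T.Nonempty := Finset.card_pos.1 (by exact_mod_cast (by linarith : (0 : ℝ) < T.card))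
  set a : ℕ → ℝ := fun t => if h : t < p then m ⟨t, h⟩ else 0
  have hST : ∀ ω, ∑ t ∈ T, (X t ω - a t) ^ 2 ≤ ∑ j ∈ J, (X j.1 ω - m j) ^ 2 := fun ω =>
    calc _ ≤ ∑ t ∈ J.image Fin.val, (X t ω - a t) ^ 2 :=
          Finset.sum_le_sum_of_subset_of_nonneg hTJ fun _ _ _ => sq_nonneg _
      _ = _ := by
          rw [Finset.sum_image Fin.val_injective.injOn]
          simp [a]
  exact lintegral_sqrt_rpow_neg_le_of_measure_le_le (by fun_prop)
    (fun ω => Finset.sum_nonneg fun _ _ => sq_nonneg _) (by positivity) hk hkT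
    fun u hu => hdep.measure_le_le_rpow hX habs hd hc.le hT hT0 a (by fun_prop) hST hu

lemma div_rpow_le_mul_rpow_div {a N E K s : ℝ} (ha : 0 ≤ a) (hN : 0 < N) (hE : 0 < E)
    (hEK : E ≤ K * N) (hs : 0 ≤ s) : (a / N) ^ s ≤ (a * K) ^ s / E ^ s := by
  have hK : 0 < K := pos_of_mul_pos_left (hE.trans_le hEK) hN.le
  rw [← div_rpow (by positivity) hE.le]
  refine rpow_le_rpow (by positivity) ?_ hs
  rw [div_le_div_iff₀ hN hE]
  nlinarith

/-- Inverse-moment bound for the vector with excluded components: there is a finite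
constant `B₂` depending only on `k, n` and the `D`-class parameters such that for every
`(X_i) ∈ D`, every `p ≥ ⌈2k⌉(M+1) + 2(nM+1)`, and every index `i`, writing
`ℰⁿ(i) = {i-nM, …, i+nM}` (exclusion set) and using the vector of the remaining
components, `E[‖X_{-ℰⁿ(i)} - m_{p,-ℰⁿ(i)}‖^{-k}] ≤ B₂ / (E‖X_{-ℰⁿ(i)} - m_{p,-ℰⁿ(i)}‖²)^{k/2}`. -/
theorem excluded_components_inverse_moment_bound
    (M : ℕ) (q c σmin C : ℝ) (hc : 0 < c) (hσ : 0 < σmin) (hq : 2 < q) (hC : 1 ≤ C)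
    (k : ℝ) (hk : 0 < k) (n : ℕ) :
    ∃ B₂ : ℝ,
      ∀ (Ω : Type) [MeasurableSpace Ω] (P : Measure Ω), IsProbabilityMeasure P →
        ∀ X : ℕ → Ω → ℝ, MemD P M q c σmin C X →
          ∀ p : ℕ, Nat.ceil (2 * k) * (M + 1) + 2 * (n * M + 1) ≤ p →
            ∀ i : Fin p, ∀ m : EuclideanSpace ℝ (Fin p),
              IsGeometricMedian P (vecOf X p) m →
              ∫⁻ ω, ENNReal.ofReal
                  ((Real.sqrt (∑ j ∈ Finset.univ.filter
                      (fun j : Fin p => j.1 < i.1 - n * M ∨ i.1 + n * M < j.1),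
                      (X j.1 ω - m j) ^ 2)) ^ (-k)) ∂P
                ≤ ENNReal.ofReal (B₂ /
                    (∫ ω, ∑ j ∈ Finset.univ.filter
                      (fun j : Fin p => j.1 < i.1 - n * M ∨ i.1 + n * M < j.1),
                      (X j.1 ω - m j) ^ 2 ∂P) ^ (k / 2)) := by
  refine ⟨(1 + k) * (2 * π * exp 1 * c ^ 2 * (10 * (1 + C) * (2 * n * M + M + 2))) ^ (k / 2), ?_⟩
  intro Ω _ P _ X hX p hp i m hm
  set J := Finset.univ.filter (fun j : Fin p => j.1 < i.1 - n * M ∨ i.1 + n * M < j.1)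
  have hX2 j := memLp_two_of_lintegral_abs_rpow_le hq.le (hX.measurable j) (hX.mom_le j)
  obtain ⟨T, hTJ, hT, hKT, hpT⟩ := exists_isSpaced_subset_filter_lt_sub_or_add_lt i.1 hp
  have hkT : k + 1 ≤ T.card := by
    have : (⌈2 * k⌉₊ : ℝ) + 1 ≤ T.card := by exact_mod_cast hKT
    linarith [Nat.le_ceil (2 * k)]
  obtain ⟨t, ht⟩ := Finset.card_pos.1 (by omega : 0 < T.card)
  obtain ⟨j, hj, -⟩ := Finset.mem_image.1 (hTJ ht)
  have hES_pos := (pow_pos hσ 2).trans_le ((hX.sd_ge j).trans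
    (variance_le_integral_sum_sq_sub (m := m) hX2 hj))
  have hES_le : ∫ ω, ∑ j ∈ J, (X j.1 ω - m j) ^ 2 ∂P
      ≤ 10 * (1 + C) * (2 * n * M + M + 2) * T.card := by
    have hsq := sum_integral_sq_le_of_lintegral_abs_rpow_le hq.le (by linarith) hX.measurable
      hX.mom_le p
    have hp : (p : ℝ) ≤ (2 * (n * M) + M + 2) * T.card := by exact_mod_cast hpT
    nlinarith [integral_sum_sq_sub_le hX2 hm J]
  refine (hX.mdep.lintegral_sqrt_sum_sq_sub_rpow_neg_le hX.measurable hX.absCont hX.density_le hc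
    m hT hTJ hk hkT).trans (ENNReal.ofReal_le_ofReal ?_)
  rw [mul_div_assoc (1 + k)]
  exact mul_le_mul_of_nonneg_left (div_rpow_le_mul_rpow_div (a := 2 * π * exp 1 * c ^ 2)
    (by positivity) (by linarith) hES_pos hES_le (by linarith)) (by linarith)
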